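/- arXiv:2410.19520 — 9 statements merged into one kernel-verified Lean document; each statement's English description precedes it below -/
import Mathlib

section
/- Let Γ and Δ be small categories, F : Γ ⥤ Cat a functor, and σ : Δ ⥤ Γ a functor. Then there is a bijection between (i) functors τ : Δ ⥤ Grothendieck F such that τ ⋙ Grothendieck.forget F = σ, and (ii) covariant sections of the functor σ ⋙ F : Δ ⥤ Cat. (This is the local representability / context-extension isomorphism of the category model of type theory.) -/
open CategoryTheory

/-- A covariant section of a functor `F : Γ ⥤ Cat`: objects `a γ : F.obj γ` together with
morphisms `m f : (F.map f).obj (a γ₀) ⟶ a γ₁`, functorial in `f`. -/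
structure CovSection {Γ : Type} [Category Γ] (F : Γ ⥤ Cat) where
  a : ∀ γ : Γ, F.obj γ
  m : ∀ (γ₀ γ₁ : Γ) (f : γ₀ ⟶ γ₁), (F.map f).toFunctor.obj (a γ₀) ⟶ a γ₁
  m_id : ∀ γ : Γ, m γ γ (𝟙 γ) = eqToHom (by simp)
  m_comp : ∀ (γ₀ γ₁ γ₂ : Γ) (f : γ₀ ⟶ γ₁) (g : γ₁ ⟶ γ₂),
    m γ₀ γ₂ (f ≫ g) = eqToHom (by simp) ≫ (F.map g).toFunctor.map (m γ₀ γ₁ f) ≫ m γ₁ γ₂ g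

/-!
A covariant section of `G : Δ ⥤ Cat` is the same thing as a section of the Grothendieck fibration
`Grothendieck.forget G`; composing with `Grothendieck.pre F σ : Grothendieck (σ ⋙ F) ⥤ Grothendieck F`
turns sections of `σ ⋙ F` into functors over `σ`. Conversely, the fibre components of a functor
`τ : Δ ⥤ Grothendieck F` form a covariant section of `(τ ⋙ forget F) ⋙ F`, the section equations
being the fibre components of `τ.map_id` and `τ.map_comp`.
-/

namespace CovSection

variable {Γ Δ : Type} [Category Γ] [Category Δ]

def toSection {G : Δ ⥤ Cat} (s : CovSection G) : Δ ⥤ Grothendieck G where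
  obj δ := ⟨δ, s.a δ⟩
  map {δ₀ δ₁} f := ⟨f, s.m δ₀ δ₁ f⟩
  map_id δ := Grothendieck.ext _ _ rfl <| by
    simp only [Grothendieck.id_base, Grothendieck.id_fiber, s.m_id]
    exact eqToHom_trans _ _
  map_comp f g := Grothendieck.ext _ _ rfl <| by
    simp only [Grothendieck.comp_base, Grothendieck.comp_fiber, s.m_comp]
    exact eqToHom_trans_assoc _ _ _

def ofFunctor {F : Γ ⥤ Cat} (τ : Δ ⥤ Grothendieck F) :
    CovSection (τ ⋙ Grothendieck.forget F ⋙ F) where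
  a δ := (τ.obj δ).fiber
  m _ _ f := (τ.map f).fiber
  m_id δ := by
    rw [Grothendieck.congr (τ.map_id δ), Grothendieck.id_fiber]
    exact eqToHom_trans _ _
  m_comp _ _ _ f g := by
    rw [Grothendieck.congr (τ.map_comp f g), Grothendieck.comp_fiber]
    exact eqToHom_trans_assoc _ _ _

def ofFunctorOver {F : Γ ⥤ Cat} {σ : Δ ⥤ Γ} (τ : Δ ⥤ Grothendieck F)
    (hτ : τ ⋙ Grothendieck.forget F = σ) : CovSection (σ ⋙ F) :=
  hτ ▸ ofFunctor τ

/- Both round trips are definitional once `τ ⋙ forget F = σ` is substituted: Grothendieck objects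
and morphisms are structures, so `⟨x.base, x.fiber⟩ ≡ x` by eta. -/
def equivFunctorOver (F : Γ ⥤ Cat) (σ : Δ ⥤ Γ) :
    {τ : Δ ⥤ Grothendieck F // τ ⋙ Grothendieck.forget F = σ} ≃ CovSection (σ ⋙ F) where
  toFun τ := ofFunctorOver τ.1 τ.2
  invFun s := ⟨s.toSection ⋙ Grothendieck.pre F σ, rfl⟩
  left_inv := by
    rintro ⟨τ, rfl⟩
    rfl
  right_inv _ := rfl

end CovSection

/-- Local representability / context extension in the category model: functors `τ : Δ ⥤ ∫F`
lying over `σ : Δ ⥤ Γ` are in bijection with covariant sections of `σ ⋙ F`. -/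
theorem grothendieck_sections_local_representability
    (Γ Δ : Type) [SmallCategory Γ] [SmallCategory Δ]
    (F : Γ ⥤ Cat) (σ : Δ ⥤ Γ) :
    Nonempty ({τ : Δ ⥤ Grothendieck F // τ ⋙ Grothendieck.forget F = σ} ≃
      CovSection (σ ⋙ F)) :=
  ⟨CovSection.equivFunctorOver F σ⟩
end

section
/- Let Γ and Δ be small categories, F : Γ ⥤ Cat a functor, and σ : Δ ⥤ Γ a functor. The commuting square in the category Cat whose sides are Grothendieck.pre F σ : Grothendieck (σ ⋙ F) ⥤ Grothendieck F, the projection Grothendieck.forget (σ ⋙ F) : Grothendieck (σ ⋙ F) ⥤ Δ, the projection Grothendieck.forget F : Grothendieck F ⥤ Γ, and σ : Δ ⥤ Γ, is a pullback square in Cat. (This is the stability of context extension under substitution in the category model.) -/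
/-!
A functor `a : X ⥤ ∫ F` is tautologically a section of `∫ ((a ⋙ forget F) ⋙ F)` over `X`.
Given a cone `(a, b)` with `a ⋙ forget F = b ⋙ σ`, transporting this section along the
equation and pushing it forward by `pre (σ ⋙ F) b` gives the lift into `∫ (σ ⋙ F)`. Once the
equation is substituted away, both factorisations and uniqueness hold definitionally.
-/

open CategoryTheory

namespace CategoryTheory.Grothendieck

universe v u v₁ u₁ v₂ u₂ w w'

variable {C : Type u} [Category.{v} C] {D : Type u₁} [Category.{v₁} D] {F : C ⥤ Cat.{v₂, u₂}}
  {X : Type w} [Category.{w'} X]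

def tautSection (a : X ⥤ Grothendieck F) : X ⥤ Grothendieck ((a ⋙ forget F) ⋙ F) where
  obj x := ⟨x, (a.obj x).fiber⟩
  map f := ⟨f, (a.map f).fiber⟩
  -- The `eqToHom`s live over `F.obj (a.obj x).base` and `((a ⋙ forget F) ⋙ F).obj x`,
  -- which agree only up to unfolding, hence `erw`.
  map_id x := Grothendieck.ext _ _ rfl <| by
    simp [Grothendieck.congr (a.map_id x)]
    erw [eqToHom_trans, eqToHom_trans]
  map_comp f g := Grothendieck.ext _ _ rfl <| by
    simp [Grothendieck.congr (a.map_comp f g)]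
    erw [eqToHom_trans_assoc, eqToHom_trans_assoc]
    rfl

theorem tautSection_comp_pre (a : X ⥤ Grothendieck F) :
    tautSection a ⋙ pre F (a ⋙ forget F) = a :=
  rfl

def pullbackLift (σ : D ⥤ C) (a : X ⥤ Grothendieck F) (b : X ⥤ D) (h : a ⋙ forget F = b ⋙ σ) :
    X ⥤ Grothendieck (σ ⋙ F) :=
  tautSection a ⋙ map (eqToHom (congrArg (· ⋙ F) h)) ⋙ pre (σ ⋙ F) b

variable (σ : D ⥤ C)

theorem pullbackLift_comp_forget {a : X ⥤ Grothendieck F} {b : X ⥤ D}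
    (h : a ⋙ forget F = b ⋙ σ) : pullbackLift σ a b h ⋙ forget (σ ⋙ F) = b :=
  rfl

theorem pullbackLift_comp_pre {a : X ⥤ Grothendieck F} {b : X ⥤ D}
    (h : a ⋙ forget F = b ⋙ σ) : pullbackLift σ a b h ⋙ pre F σ = a := by
  change tautSection a ⋙ map (eqToHom (congrArg (· ⋙ F) h)) ⋙ pre F (b ⋙ σ) = a
  generalize b ⋙ σ = G at h
  subst h
  rw [eqToHom_refl, map_id_eq]
  exact tautSection_comp_pre a

theorem eq_pullbackLift (m : X ⥤ Grothendieck (σ ⋙ F)) :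
    m = pullbackLift σ (m ⋙ pre F σ) (m ⋙ forget (σ ⋙ F)) rfl := by
  change m = tautSection _ ⋙ map (𝟙 _) ⋙ _
  rw [map_id_eq]
  rfl

theorem pullbackLift_unique {a : X ⥤ Grothendieck F} {b : X ⥤ D} (h : a ⋙ forget F = b ⋙ σ)
    {m : X ⥤ Grothendieck (σ ⋙ F)} (hpre : m ⋙ pre F σ = a) (hforget : m ⋙ forget (σ ⋙ F) = b) :
    m = pullbackLift σ a b h := by
  subst hpre hforget
  exact eq_pullbackLift σ m

open Limits in
theorem isPullback_pre {C D : Type u} [Category.{v} C] [Category.{v} D] (F : C ⥤ Cat.{v, u})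
    (σ : D ⥤ C) :
    IsPullback (pre F σ).toCatHom (forget (σ ⋙ F)).toCatHom (forget F).toCatHom σ.toCatHom := by
  have cond (s : PullbackCone (forget F).toCatHom σ.toCatHom) :
      s.fst.toFunctor ⋙ forget F = s.snd.toFunctor ⋙ σ :=
    congr(($s.condition).toFunctor)
  exact IsPullback.of_isLimit' ⟨rfl⟩ <| PullbackCone.IsLimit.mk _
    (fun s => (pullbackLift σ _ _ (cond s)).toCatHom)
    (fun s => Cat.ext (pullbackLift_comp_pre σ (cond s)))
    (fun s => Cat.ext (pullbackLift_comp_forget σ (cond s)))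
    (fun s _ hpre hforget =>
      Cat.ext (pullbackLift_unique σ (cond s) congr(($hpre).toFunctor) congr(($hforget).toFunctor)))

end CategoryTheory.Grothendieck

/-- Stability of context extension under substitution in the category model: the square
whose sides are `Grothendieck.pre F σ`, `Grothendieck.forget (σ ⋙ F)`,
`Grothendieck.forget F`, and `σ` is a pullback square in `Cat`. -/
theorem grothendieck_pre_isPullback
    (Γ Δ : Type) [SmallCategory Γ] [SmallCategory Δ]
    (F : Γ ⥤ Cat.{0, 0}) (σ : Δ ⥤ Γ) :
    IsPullback
      (show Cat.of (Grothendieck (σ ⋙ F)) ⟶ Cat.of (Grothendieck F) from (Grothendieck.pre F σ).toCatHom)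
      (show Cat.of (Grothendieck (σ ⋙ F)) ⟶ Cat.of Δ from (Grothendieck.forget (σ ⋙ F)).toCatHom)
      (show Cat.of (Grothendieck F) ⟶ Cat.of Γ from (Grothendieck.forget F).toCatHom)
      (show Cat.of Δ ⟶ Cat.of Γ from σ.toCatHom) :=
  Grothendieck.isPullback_pre F σ
end

section
/- Let Γ be a small category, F : Γ ⥤ Cat a functor, t = (a, m) a contravariant section of F, and t' = (a', m') a covariant section of F. Define H on objects by H γ = Hom_{F.obj γ}(a γ, a' γ), and for a morphism f : γ₀ ⟶ γ₁ define H f : H γ₀ → H γ₁ by h ↦ m f ≫ (F.map f).map h ≫ m' f. Then H preserves identities (H (𝟙 γ) = id) and composition (H (f ≫ g) = H g ∘ H f), i.e., H defines a functor Γ ⥤ Type. (This is the well-definedness of the hom-type former in the category model of directed type theory.) -/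
/-
Functoriality of `F` holds only up to the equalities `F.map (𝟙 γ) = 𝟙` and
`F.map (f ≫ g) = F.map f ≫ F.map g`, so on morphisms `F.map (𝟙 γ)` and `F.map (f ≫ g)` act as
`h` and `(F.map g).map ((F.map f).map h)` conjugated by `eqToHom`s. The section laws introduce
exactly the same `eqToHom`s on the outside of `m` and `m'`, so after substituting all four laws
the transport morphisms cancel in pairs and what is left is functoriality of `F.map g`.
-/

open CategoryTheory

/-- Covariant section laws of `F : Γ ⥤ Cat`. -/
def IsCovSection {Γ : Type} [Category Γ] (F : Γ ⥤ Cat)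
    (a : ∀ γ : Γ, F.obj γ)
    (m : ∀ (γ₀ γ₁ : Γ) (f : γ₀ ⟶ γ₁), (F.map f).toFunctor.obj (a γ₀) ⟶ a γ₁) : Prop :=
  (∀ γ : Γ, m γ γ (𝟙 γ) = eqToHom (by simp)) ∧
  (∀ (γ₀ γ₁ γ₂ : Γ) (f : γ₀ ⟶ γ₁) (g : γ₁ ⟶ γ₂),
    m γ₀ γ₂ (f ≫ g) = eqToHom (by simp) ≫ (F.map g).toFunctor.map (m γ₀ γ₁ f) ≫ m γ₁ γ₂ g)

/-- Contravariant section laws of `F : Γ ⥤ Cat`. -/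
def IsContraSection {Γ : Type} [Category Γ] (F : Γ ⥤ Cat)
    (a : ∀ γ : Γ, F.obj γ)
    (m : ∀ (γ₀ γ₁ : Γ) (f : γ₀ ⟶ γ₁), a γ₁ ⟶ (F.map f).toFunctor.obj (a γ₀)) : Prop :=
  (∀ γ : Γ, m γ γ (𝟙 γ) = eqToHom (by simp)) ∧
  (∀ (γ₀ γ₁ γ₂ : Γ) (f : γ₀ ⟶ γ₁) (g : γ₁ ⟶ γ₂),
    m γ₀ γ₂ (f ≫ g) = m γ₁ γ₂ g ≫ (F.map g).toFunctor.map (m γ₀ γ₁ f) ≫ eqToHom (by simp))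

namespace CategoryTheory.Functor

variable {C : Type*} [Category C] (F : C ⥤ Cat)

lemma map_id_toFunctor_map {γ : C} {X Y : F.obj γ} (h : X ⟶ Y) :
    (F.map (𝟙 γ)).toFunctor.map h = eqToHom (by simp) ≫ h ≫ eqToHom (by simp) := by
  simpa using Functor.congr_hom (congrArg Cat.Hom.toFunctor (F.map_id γ)) h

lemma map_comp_toFunctor_map {γ₀ γ₁ γ₂ : C} (f : γ₀ ⟶ γ₁) (g : γ₁ ⟶ γ₂) {X Y : F.obj γ₀}
    (h : X ⟶ Y) :
    (F.map (f ≫ g)).toFunctor.map h =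
      eqToHom (by simp) ≫ (F.map g).toFunctor.map ((F.map f).toFunctor.map h) ≫
        eqToHom (by simp) := by
  simpa using Functor.congr_hom (congrArg Cat.Hom.toFunctor (F.map_comp f g)) h

end CategoryTheory.Functor

/-- The hom-type former in the category model is well defined: given a contravariant section
`t = (a, m)` and a covariant section `t' = (a', m')` of `F`, the assignment
`H γ = (a γ ⟶ a' γ)`, `H f h = m f ≫ (F.map f).toFunctor.map h ≫ m' f` preserves identities and
composition, i.e. defines a functor `Γ ⥤ Type`. -/
theorem hom_former_is_functor {Γ : Type} [SmallCategory Γ] (F : Γ ⥤ Cat)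
    (a : ∀ γ : Γ, F.obj γ)
    (m : ∀ (γ₀ γ₁ : Γ) (f : γ₀ ⟶ γ₁), a γ₁ ⟶ (F.map f).toFunctor.obj (a γ₀))
    (a' : ∀ γ : Γ, F.obj γ)
    (m' : ∀ (γ₀ γ₁ : Γ) (f : γ₀ ⟶ γ₁), (F.map f).toFunctor.obj (a' γ₀) ⟶ a' γ₁)
    (ht : IsContraSection F a m) (ht' : IsCovSection F a' m') :
    (∀ (γ : Γ) (h : a γ ⟶ a' γ),
      m γ γ (𝟙 γ) ≫ (F.map (𝟙 γ)).toFunctor.map h ≫ m' γ γ (𝟙 γ) = h) ∧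
    (∀ (γ₀ γ₁ γ₂ : Γ) (f : γ₀ ⟶ γ₁) (g : γ₁ ⟶ γ₂) (h : a γ₀ ⟶ a' γ₀),
      m γ₀ γ₂ (f ≫ g) ≫ (F.map (f ≫ g)).toFunctor.map h ≫ m' γ₀ γ₂ (f ≫ g) =
        m γ₁ γ₂ g ≫ (F.map g).toFunctor.map (m γ₀ γ₁ f ≫ (F.map f).toFunctor.map h ≫ m' γ₀ γ₁ f) ≫
          m' γ₁ γ₂ g) := by
  obtain ⟨m_id, m_comp⟩ := ht
  obtain ⟨m'_id, m'_comp⟩ := ht'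
  constructor
  · intro γ h
    simp [m_id, m'_id, F.map_id_toFunctor_map]
  · intro γ₀ γ₁ γ₂ f g h
    simp [m_comp, m'_comp, F.map_comp_toFunctor_map]
end

section
/- Let Γ be a groupoid and F : Γ ⥤ Cat a functor, and let t = (a, m) be a contravariant section of F. For each morphism f : γ₀ ⟶ γ₁ of Γ, define m⁻ f : (F.map f).obj (a γ₀) ⟶ a γ₁ as the composite of (F.map f).map (m (Groupoid.inv f)) with the canonical morphism (eqToHom) identifying (F.map f).obj ((F.map (Groupoid.inv f)).obj (a γ₁)) with a γ₁ (via F.map_comp and F.map_id). Then (a, m⁻) is a covariant section of F. (This is the well-definedness of the neutral-context coercion −t in the category model.) -/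
open CategoryTheory

/-- The hom-term condition from a contravariant section `(a, m)` to a covariant
section `(a', m')` of `F`. -/
def IsHomTerm {Γ : Type} [Category Γ] (F : Γ ⥤ Cat)
    (a : ∀ γ : Γ, F.obj γ)
    (m : ∀ (γ₀ γ₁ : Γ) (f : γ₀ ⟶ γ₁), a γ₁ ⟶ (F.map f).toFunctor.obj (a γ₀))
    (a' : ∀ γ : Γ, F.obj γ)
    (m' : ∀ (γ₀ γ₁ : Γ) (f : γ₀ ⟶ γ₁), (F.map f).toFunctor.obj (a' γ₀) ⟶ a' γ₁)
    (e : ∀ γ : Γ, a γ ⟶ a' γ) : Prop :=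
  ∀ (γ₀ γ₁ : Γ) (f : γ₀ ⟶ γ₁), e γ₁ = m γ₀ γ₁ f ≫ (F.map f).toFunctor.map (e γ₀) ≫ m' γ₀ γ₁ f

/-- Neutral-context coercion `m ↦ m⁻` on morphism parts (contravariant to covariant), for a
groupoid context `Γ`: `m⁻ f = (F.map f).toFunctor.map (m (Groupoid.inv f)) ≫ eqToHom _`. -/
def negMap {Γ : Type} [Groupoid Γ] (F : Γ ⥤ Cat)
    (a : ∀ γ : Γ, F.obj γ)
    (m : ∀ (γ₀ γ₁ : Γ) (f : γ₀ ⟶ γ₁), a γ₁ ⟶ (F.map f).toFunctor.obj (a γ₀))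
    (γ₀ γ₁ : Γ) (f : γ₀ ⟶ γ₁) : (F.map f).toFunctor.obj (a γ₀) ⟶ a γ₁ :=
  (F.map f).toFunctor.map (m γ₁ γ₀ (Groupoid.inv f)) ≫
    eqToHom (by rw [← Cat.Hom.comp_obj, ← F.map_comp, Groupoid.inv_comp, F.map_id, Cat.Hom.id_obj])

/-- Neutral-context coercion `n ↦ n⁻` on morphism parts (covariant to contravariant), for a
groupoid context `Γ`: `n⁻ f = eqToHom _ ≫ (F.map f).toFunctor.map (n (Groupoid.inv f))`. -/
def negMap' {Γ : Type} [Groupoid Γ] (F : Γ ⥤ Cat)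
    (a : ∀ γ : Γ, F.obj γ)
    (n : ∀ (γ₀ γ₁ : Γ) (f : γ₀ ⟶ γ₁), (F.map f).toFunctor.obj (a γ₀) ⟶ a γ₁)
    (γ₀ γ₁ : Γ) (f : γ₀ ⟶ γ₁) : a γ₁ ⟶ (F.map f).toFunctor.obj (a γ₀) :=
  eqToHom (by rw [← Cat.Hom.comp_obj, ← F.map_comp, Groupoid.inv_comp, F.map_id, Cat.Hom.id_obj]) ≫
    (F.map f).toFunctor.map (n γ₁ γ₀ (Groupoid.inv f))

/-! `m⁻ f` is `m (f⁻¹)` pushed forward along `F f`. The identity law follows from `𝟙⁻¹ = 𝟙`.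
For the composition law, expand `m ((f ≫ g)⁻¹) = m (g⁻¹ ≫ f⁻¹)` by the contravariant law and push
it forward along `F (f ≫ g)`; since `F (f ≫ g) = F f ≫ F g` and `F f⁻¹ ≫ F (f ≫ g) = F g`, the two
factors become `F g (F f (m f⁻¹))` and `F g (m g⁻¹)`, up to canonical isomorphisms. -/

theorem hom_family_eq_comp_eqToHom {C : Type*} [Category C] {ι : Sort*} {X : C} {Y : ι → C}
    (m : ∀ i, X ⟶ Y i) {i j : ι} (h : i = j) : m i = m j ≫ eqToHom (congrArg Y h.symm) := by
  subst h
  simp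

theorem Functor.toFunctor_map_map_of_comp_eq {Γ : Type} [Category Γ] (F : Γ ⥤ Cat)
    {γ₀ γ₁ γ₂ : Γ} {f : γ₀ ⟶ γ₁} {g : γ₁ ⟶ γ₂} {k : γ₀ ⟶ γ₂} (h : f ≫ g = k)
    {X Y : F.obj γ₀} (x : X ⟶ Y) :
    (F.map g).toFunctor.map ((F.map f).toFunctor.map x) =
      eqToHom (by rw [← h, F.map_comp, Cat.Hom.comp_obj]) ≫ (F.map k).toFunctor.map x ≫
        eqToHom (by rw [← h, F.map_comp, Cat.Hom.comp_obj]) := by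
  subst h
  rw [Functor.congr_hom (congrArg Cat.Hom.toFunctor (F.map_comp f g)) x]
  simp

section

variable {Γ : Type} [Groupoid Γ] {F : Γ ⥤ Cat} {a : ∀ γ : Γ, F.obj γ}
  {m : ∀ (γ₀ γ₁ : Γ) (f : γ₀ ⟶ γ₁), a γ₁ ⟶ (F.map f).toFunctor.obj (a γ₀)}

theorem negMap_id (hid : ∀ γ : Γ, m γ γ (𝟙 γ) = eqToHom (by simp)) (γ : Γ) :
    negMap F a m γ γ (𝟙 γ) = eqToHom (by simp) := by
  have hinv : Groupoid.inv (𝟙 γ) = 𝟙 γ := by simp [Groupoid.inv_eq_inv]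
  rw [negMap, hom_family_eq_comp_eqToHom (m γ γ) hinv, hid]
  simp [eqToHom_map]

theorem negMap_comp
    (hcomp : ∀ (γ₀ γ₁ γ₂ : Γ) (f : γ₀ ⟶ γ₁) (g : γ₁ ⟶ γ₂),
      m γ₀ γ₂ (f ≫ g) = m γ₁ γ₂ g ≫ (F.map g).toFunctor.map (m γ₀ γ₁ f) ≫ eqToHom (by simp))
    {γ₀ γ₁ γ₂ : Γ} (f : γ₀ ⟶ γ₁) (g : γ₁ ⟶ γ₂) :
    negMap F a m γ₀ γ₂ (f ≫ g) = eqToHom (by simp) ≫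
      (F.map g).toFunctor.map (negMap F a m γ₀ γ₁ f) ≫ negMap F a m γ₁ γ₂ g := by
  have hinv : Groupoid.inv (f ≫ g) = Groupoid.inv g ≫ Groupoid.inv f := by
    simp [Groupoid.inv_eq_inv]
  have hcancel : Groupoid.inv f ≫ f ≫ g = g := by simp
  rw [negMap, hom_family_eq_comp_eqToHom (m γ₂ γ₀) hinv, hcomp]
  simp only [negMap, Functor.map_comp, Category.assoc, eqToHom_map]
  rw [Functor.toFunctor_map_map_of_comp_eq F hcancel,
    Functor.toFunctor_map_map_of_comp_eq F (rfl : f ≫ g = f ≫ g)]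
  simp

end

/-- Neutral-context coercion is well defined in the category model: for a groupoid `Γ` and a
contravariant section `t = (a, m)` of `F : Γ ⥤ Cat`, the data `(a, m⁻)` is a covariant
section of `F`. -/
theorem negMap_isCovSection {Γ : Type} [Groupoid Γ] (F : Γ ⥤ Cat)
    (a : ∀ γ : Γ, F.obj γ)
    (m : ∀ (γ₀ γ₁ : Γ) (f : γ₀ ⟶ γ₁), a γ₁ ⟶ (F.map f).toFunctor.obj (a γ₀))
    (ht : IsContraSection F a m) :
    IsCovSection F a (negMap F a m) :=
  ⟨negMap_id ht.1, fun _ _ _ => negMap_comp ht.2⟩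
end

section
/- Let Γ be a groupoid and F : Γ ⥤ Cat a functor. The neutral-context coercion sending a contravariant section (a, m) of F to the covariant section (a, m⁻), where m⁻ f = (F.map f).map (m (Groupoid.inv f)) followed by the canonical eqToHom, and the neutral-context coercion sending a covariant section (a', n) of F to the contravariant section (a', n⁻), where n⁻ f is the canonical eqToHom followed by (F.map f).map (n (Groupoid.inv f)), are mutually inverse: applying one coercion and then the other returns the original section (the object parts are unchanged and the morphism parts agree). -/
open CategoryTheory

/-! The functors `F.map f` and `F.map (Groupoid.inv f)` are mutually inverse up to the
equalities `F.map_comp` and `F.map_id`, so conjugating by them changes a morphism only by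
`eqToHom`s. Since also `Groupoid.inv (Groupoid.inv f) = f`, each round trip of the coercions
returns the original morphism up to `eqToHom`s, which then cancel. -/

theorem contraFamily_congr {Γ : Type} [Category Γ] (F : Γ ⥤ Cat) (a : ∀ γ : Γ, F.obj γ)
    (m : ∀ (γ₀ γ₁ : Γ) (f : γ₀ ⟶ γ₁), a γ₁ ⟶ (F.map f).toFunctor.obj (a γ₀))
    {γ₀ γ₁ : Γ} {g g' : γ₀ ⟶ γ₁} (h : g = g') :
    m γ₀ γ₁ g = m γ₀ γ₁ g' ≫ eqToHom (by rw [h]) := by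
  subst h
  simp

theorem covFamily_congr {Γ : Type} [Category Γ] (F : Γ ⥤ Cat) (a : ∀ γ : Γ, F.obj γ)
    (n : ∀ (γ₀ γ₁ : Γ) (f : γ₀ ⟶ γ₁), (F.map f).toFunctor.obj (a γ₀) ⟶ a γ₁)
    {γ₀ γ₁ : Γ} {g g' : γ₀ ⟶ γ₁} (h : g = g') :
    n γ₀ γ₁ g = eqToHom (by rw [h]) ≫ n γ₀ γ₁ g' := by
  subst h
  simp

section

variable {Γ : Type} [Groupoid Γ] (F : Γ ⥤ Cat)

theorem Groupoid.inv_inv {γ₀ γ₁ : Γ} (f : γ₀ ⟶ γ₁) : Groupoid.inv (Groupoid.inv f) = f := by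
  simp [Groupoid.inv_eq_inv]

theorem map_map_groupoidInv_map {γ₀ γ₁ : Γ} (f : γ₀ ⟶ γ₁) {X Y : F.obj γ₁} (x : X ⟶ Y) :
    (F.map f).toFunctor.map ((F.map (Groupoid.inv f)).toFunctor.map x) =
      eqToHom (by simp [← Cat.Hom.comp_obj]) ≫ x ≫
        eqToHom (by simp [← Cat.Hom.comp_obj]) := by
  have hid : (F.map (Groupoid.inv f) ≫ F.map f).toFunctor =
      (𝟙 (F.obj γ₁) : F.obj γ₁ ⟶ F.obj γ₁).toFunctor := by
    rw [← F.map_comp, Groupoid.inv_comp, F.map_id]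
  simpa using Functor.congr_hom hid x

theorem negMap'_negMap (a : ∀ γ : Γ, F.obj γ)
    (m : ∀ (γ₀ γ₁ : Γ) (f : γ₀ ⟶ γ₁), a γ₁ ⟶ (F.map f).toFunctor.obj (a γ₀))
    {γ₀ γ₁ : Γ} (f : γ₀ ⟶ γ₁) :
    negMap' F a (negMap F a m) γ₀ γ₁ f = m γ₀ γ₁ f := by
  simp only [negMap, negMap', contraFamily_congr F a m (Groupoid.inv_inv f), Functor.map_comp,
    eqToHom_map, map_map_groupoidInv_map]
  simp

theorem negMap_negMap' (a : ∀ γ : Γ, F.obj γ)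
    (n : ∀ (γ₀ γ₁ : Γ) (f : γ₀ ⟶ γ₁), (F.map f).toFunctor.obj (a γ₀) ⟶ a γ₁)
    {γ₀ γ₁ : Γ} (f : γ₀ ⟶ γ₁) :
    negMap F a (negMap' F a n) γ₀ γ₁ f = n γ₀ γ₁ f := by
  simp only [negMap, negMap', covFamily_congr F a n (Groupoid.inv_inv f), Functor.map_comp,
    eqToHom_map, map_map_groupoidInv_map]
  simp

end

/-- The two neutral-context coercions are mutually inverse: for a groupoid `Γ`, coercing a
contravariant section `(a, m)` to the covariant section `(a, m⁻)` and back returns `(a, m)`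
(the object part is unchanged by construction and the morphism parts agree), and likewise
starting from a covariant section `(a', n)`. -/
theorem negMap_negMap'_inverse {Γ : Type} [Groupoid Γ] (F : Γ ⥤ Cat) :
    (∀ (a : ∀ γ : Γ, F.obj γ)
      (m : ∀ (γ₀ γ₁ : Γ) (f : γ₀ ⟶ γ₁), a γ₁ ⟶ (F.map f).toFunctor.obj (a γ₀)),
      IsContraSection F a m →
        ∀ (γ₀ γ₁ : Γ) (f : γ₀ ⟶ γ₁), negMap' F a (negMap F a m) γ₀ γ₁ f = m γ₀ γ₁ f) ∧
    (∀ (a' : ∀ γ : Γ, F.obj γ)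
      (n : ∀ (γ₀ γ₁ : Γ) (f : γ₀ ⟶ γ₁), (F.map f).toFunctor.obj (a' γ₀) ⟶ a' γ₁),
      IsCovSection F a' n →
        ∀ (γ₀ γ₁ : Γ) (f : γ₀ ⟶ γ₁), negMap F a' (negMap' F a' n) γ₀ γ₁ f = n γ₀ γ₁ f) := by
  exact ⟨fun a m _ _ _ f => negMap'_negMap F a m f, fun a' n _ _ _ f => negMap_negMap' F a' n f⟩
end

section
/- Let Γ be a groupoid, F : Γ ⥤ Cat a functor, and t = (a, m) a contravariant section of F with neutral-context coercion −t = (a, m⁻). Then the family of identity morphisms (𝟙 (a γ))_{γ} is a hom-term from t to −t; equivalently, for every morphism f : γ₀ ⟶ γ₁ of Γ, m f ≫ (F.map f).map (𝟙 (a γ₀)) ≫ m⁻ f = 𝟙 (a γ₁). (This is the well-typedness of the reflexivity term refl_t : hom(t, −t) in the category model.) -/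
open CategoryTheory

namespace IsContraSection

section Category

variable {Γ : Type} [Category Γ] {F : Γ ⥤ Cat} {a : ∀ γ : Γ, F.obj γ}
  {m : ∀ (γ₀ γ₁ : Γ) (f : γ₀ ⟶ γ₁), a γ₁ ⟶ (F.map f).toFunctor.obj (a γ₀)}

theorem app_eq_eqToHom_of_eq_id (ht : IsContraSection F a m) {γ : Γ} {k : γ ⟶ γ}
    (hk : k = 𝟙 γ) : m γ γ k = eqToHom (by subst hk; simp) := by
  subst hk
  exact ht.1 γ

end Category

variable {Γ : Type} [Groupoid Γ] {F : Γ ⥤ Cat} {a : ∀ γ : Γ, F.obj γ}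
  {m : ∀ (γ₀ γ₁ : Γ) (f : γ₀ ⟶ γ₁), a γ₁ ⟶ (F.map f).toFunctor.obj (a γ₀)}

/-- The composition law at `inv f ≫ f = 𝟙` makes `m⁻` a right inverse of `m`. -/
theorem comp_negMap (ht : IsContraSection F a m) {γ₀ γ₁ : Γ} (f : γ₀ ⟶ γ₁) :
    m γ₀ γ₁ f ≫ negMap F a m γ₀ γ₁ f = 𝟙 (a γ₁) := by
  have hcomp := ht.2 γ₁ γ₀ γ₁ (Groupoid.inv f) f
  rw [ht.app_eq_eqToHom_of_eq_id (Groupoid.inv_comp f), ← Category.assoc, eq_comm,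
    comp_eqToHom_iff, eqToHom_trans] at hcomp
  rw [negMap, ← Category.assoc, hcomp, eqToHom_trans, eqToHom_refl]

end IsContraSection

/-- Well-typedness of the reflexivity term `refl_t : hom(t, −t)` in the category model: for a
groupoid `Γ` and a contravariant section `t = (a, m)` of `F` with coercion `−t = (a, m⁻)`,
the family of identities `(𝟙 (a γ))_γ` is a hom-term from `t` to `−t`; equivalently,
`m f ≫ (F.map f).toFunctor.map (𝟙 (a γ₀)) ≫ m⁻ f = 𝟙 (a γ₁)` for every `f : γ₀ ⟶ γ₁`. -/
theorem refl_isHomTerm {Γ : Type} [Groupoid Γ] (F : Γ ⥤ Cat)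
    (a : ∀ γ : Γ, F.obj γ)
    (m : ∀ (γ₀ γ₁ : Γ) (f : γ₀ ⟶ γ₁), a γ₁ ⟶ (F.map f).toFunctor.obj (a γ₀))
    (ht : IsContraSection F a m) :
    IsHomTerm F a m a (negMap F a m) (fun γ => 𝟙 (a γ)) := by
  intro γ₀ γ₁ f
  simp only [CategoryTheory.Functor.map_id, Category.id_comp]
  exact (ht.comp_negMap f).symm
end

section
/- Let Γ be a groupoid and F : Γ ⥤ Cat a functor. Let t and u be contravariant sections of F, let v be a covariant section of F, and let −u denote the neutral-context coercion of u to a covariant section. If p is a hom-term from t to −u and q is a hom-term from u to v, then the pointwise composite family (p γ ≫ q γ)_{γ} is a hom-term from t to v. (This is the well-typedness of composition of homs in the category model.) -/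
open CategoryTheory

namespace IsContraSection

section

variable {Γ : Type} [Category Γ] {F : Γ ⥤ Cat} {a : ∀ γ : Γ, F.obj γ}
  {m : ∀ (γ₀ γ₁ : Γ) (f : γ₀ ⟶ γ₁), a γ₁ ⟶ (F.map f).toFunctor.obj (a γ₀)}

theorem map_eq_eqToHom_of_eq_id (h : IsContraSection F a m) {γ : Γ} {g : γ ⟶ γ}
    (hg : g = 𝟙 γ) : m γ γ g = eqToHom (by subst hg; simp) := by
  subst hg
  exact h.1 γ

end

variable {Γ : Type} [Groupoid Γ] {F : Γ ⥤ Cat} {a : ∀ γ : Γ, F.obj γ}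
  {m : ∀ (γ₀ γ₁ : Γ) (f : γ₀ ⟶ γ₁), a γ₁ ⟶ (F.map f).toFunctor.obj (a γ₀)}

theorem map_inv_comp_map_map (h : IsContraSection F a m) {γ₀ γ₁ : Γ} (f : γ₀ ⟶ γ₁) :
    m γ₁ γ₀ (Groupoid.inv f) ≫ (F.map (Groupoid.inv f)).toFunctor.map (m γ₀ γ₁ f) =
      eqToHom (by rw [← Cat.Hom.comp_obj, ← F.map_comp, Groupoid.comp_inv, F.map_id]; rfl) := by
  have hcomp := h.2 γ₀ γ₁ γ₀ f (Groupoid.inv f)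
  rw [h.map_eq_eqToHom_of_eq_id (Groupoid.comp_inv f), ← Category.assoc] at hcomp
  simpa using (comp_eqToHom_iff _ _ _).1 hcomp.symm

theorem negMap_comp (h : IsContraSection F a m) {γ₀ γ₁ : Γ} (f : γ₀ ⟶ γ₁) :
    negMap F a m γ₀ γ₁ f ≫ m γ₀ γ₁ f = 𝟙 _ := by
  have hF_inv_comp : F.map (Groupoid.inv f) ≫ F.map f = 𝟙 (F.obj γ₁) := by
    rw [← F.map_comp, Groupoid.inv_comp, F.map_id]
  have hmap_inv_map := Functor.congr_hom (congrArg Cat.Hom.toFunctor hF_inv_comp) (m γ₀ γ₁ f)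
  have hinv := congrArg (F.map f).toFunctor.map (h.map_inv_comp_map_map f)
  simp only [Cat.Hom.comp_map, Cat.Hom.id_map, Functor.map_comp, eqToHom_map] at hmap_inv_map hinv
  rw [hmap_inv_map] at hinv
  simp only [← Category.assoc] at hinv
  simpa [negMap] using (comp_eqToHom_iff _ _ _).1 hinv

end IsContraSection

theorem IsHomTerm.comp {Γ : Type} [Category Γ] {F : Γ ⥤ Cat} {ta ua va : ∀ γ : Γ, F.obj γ}
    {tm : ∀ (γ₀ γ₁ : Γ) (f : γ₀ ⟶ γ₁), ta γ₁ ⟶ (F.map f).toFunctor.obj (ta γ₀)}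
    {un : ∀ (γ₀ γ₁ : Γ) (f : γ₀ ⟶ γ₁), (F.map f).toFunctor.obj (ua γ₀) ⟶ ua γ₁}
    {um : ∀ (γ₀ γ₁ : Γ) (f : γ₀ ⟶ γ₁), ua γ₁ ⟶ (F.map f).toFunctor.obj (ua γ₀)}
    {vm : ∀ (γ₀ γ₁ : Γ) (f : γ₀ ⟶ γ₁), (F.map f).toFunctor.obj (va γ₀) ⟶ va γ₁}
    {p : ∀ γ : Γ, ta γ ⟶ ua γ} {q : ∀ γ : Γ, ua γ ⟶ va γ}
    (hp : IsHomTerm F ta tm ua un p) (hq : IsHomTerm F ua um va vm q)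
    (hnm : ∀ (γ₀ γ₁ : Γ) (f : γ₀ ⟶ γ₁), un γ₀ γ₁ f ≫ um γ₀ γ₁ f = 𝟙 _) :
    IsHomTerm F ta tm va vm (fun γ => p γ ≫ q γ) := by
  intro γ₀ γ₁ f
  dsimp only
  rw [hp γ₀ γ₁ f, hq γ₀ γ₁ f]
  simp only [Functor.map_comp, Category.assoc, reassoc_of% (hnm γ₀ γ₁ f)]

theorem homTerm_comp_general {Γ : Type} [Groupoid Γ] (F : Γ ⥤ Cat)
    (ta : ∀ γ : Γ, F.obj γ)
    (tm : ∀ (γ₀ γ₁ : Γ) (f : γ₀ ⟶ γ₁), ta γ₁ ⟶ (F.map f).toFunctor.obj (ta γ₀))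
    (ua : ∀ γ : Γ, F.obj γ)
    (um : ∀ (γ₀ γ₁ : Γ) (f : γ₀ ⟶ γ₁), ua γ₁ ⟶ (F.map f).toFunctor.obj (ua γ₀))
    (hu : IsContraSection F ua um)
    (va : ∀ γ : Γ, F.obj γ)
    (vm : ∀ (γ₀ γ₁ : Γ) (f : γ₀ ⟶ γ₁), (F.map f).toFunctor.obj (va γ₀) ⟶ va γ₁)
    (p : ∀ γ : Γ, ta γ ⟶ ua γ) (hp : IsHomTerm F ta tm ua (negMap F ua um) p)
    (q : ∀ γ : Γ, ua γ ⟶ va γ) (hq : IsHomTerm F ua um va vm q) :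
    IsHomTerm F ta tm va vm (fun γ => p γ ≫ q γ) :=
  hp.comp hq fun _ _ f => hu.negMap_comp f

/-- Well-typedness of composition of homs in the category model: for a groupoid `Γ`,
contravariant sections `t`, `u` and a covariant section `v` of `F`, if `p` is a hom-term from
`t` to `−u` and `q` is a hom-term from `u` to `v`, then the pointwise composite
`(p γ ≫ q γ)_γ` is a hom-term from `t` to `v`. -/
theorem homTerm_comp {Γ : Type} [Groupoid Γ] (F : Γ ⥤ Cat)
    (ta : ∀ γ : Γ, F.obj γ)
    (tm : ∀ (γ₀ γ₁ : Γ) (f : γ₀ ⟶ γ₁), ta γ₁ ⟶ (F.map f).toFunctor.obj (ta γ₀))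
    (ht : IsContraSection F ta tm)
    (ua : ∀ γ : Γ, F.obj γ)
    (um : ∀ (γ₀ γ₁ : Γ) (f : γ₀ ⟶ γ₁), ua γ₁ ⟶ (F.map f).toFunctor.obj (ua γ₀))
    (hu : IsContraSection F ua um)
    (va : ∀ γ : Γ, F.obj γ)
    (vm : ∀ (γ₀ γ₁ : Γ) (f : γ₀ ⟶ γ₁), (F.map f).toFunctor.obj (va γ₀) ⟶ va γ₁)
    (hv : IsCovSection F va vm)
    (p : ∀ γ : Γ, ta γ ⟶ ua γ) (hp : IsHomTerm F ta tm ua (negMap F ua um) p)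
    (q : ∀ γ : Γ, ua γ ⟶ va γ) (hq : IsHomTerm F ua um va vm q) :
    IsHomTerm F ta tm va vm (fun γ => p γ ≫ q γ) :=
  homTerm_comp_general F ta tm ua um hu va vm p hp q hq
end

section
/- Let Γ be a small category and F : Γ ⥤ Cat a functor such that F.obj γ is a groupoid for every object γ of Γ. Let t = (a, m) be a contravariant section of F, t' = (a', m') a covariant section of F, and e a hom-term from t to t'. Then the family of inverses (Groupoid.inv (e γ))_{γ} is a hom-term from the fiberwise coercion of t' (the contravariant section (a', (Groupoid.inv (m' f))_f)) to the fiberwise coercion of t (the covariant section (a, (Groupoid.inv (m f))_f)); explicitly, for every f : γ₀ ⟶ γ₁, Groupoid.inv (e γ₁) = Groupoid.inv (m' f) ≫ (F.map f).map (Groupoid.inv (e γ₀)) ≫ Groupoid.inv (m f). (This is the semantic content of the Proposition that in any directed CwF, the hom-types of a neutral type are symmetric identity types.) -/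
open CategoryTheory

theorem neutral_homTerm_symm_general {Γ : Type} [SmallCategory Γ] (F : Γ ⥤ Cat)
    (hG : ∀ (γ : Γ) (x y : F.obj γ) (h : x ⟶ y), IsIso h)
    (a : ∀ γ : Γ, F.obj γ)
    (m : ∀ (γ₀ γ₁ : Γ) (f : γ₀ ⟶ γ₁), a γ₁ ⟶ (F.map f).toFunctor.obj (a γ₀))
    (a' : ∀ γ : Γ, F.obj γ)
    (m' : ∀ (γ₀ γ₁ : Γ) (f : γ₀ ⟶ γ₁), (F.map f).toFunctor.obj (a' γ₀) ⟶ a' γ₁)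
    (e : ∀ γ : Γ, a γ ⟶ a' γ) (he : IsHomTerm F a m a' m' e) :
    IsHomTerm F
      a' (fun γ₀ γ₁ f => letI := hG γ₁ _ _ (m' γ₀ γ₁ f); inv (m' γ₀ γ₁ f))
      a (fun γ₀ γ₁ f => letI := hG γ₁ _ _ (m γ₀ γ₁ f); inv (m γ₀ γ₁ f))
      (fun γ => letI := hG γ _ _ (e γ); inv (e γ)) := by
  intro γ₀ γ₁ f
  have := hG γ₁ _ _ (m γ₀ γ₁ f)
  have := hG γ₁ _ _ (m' γ₀ γ₁ f)
  have := hG γ₀ _ _ (e γ₀)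
  calc inv (e γ₁)
      = inv (m γ₀ γ₁ f ≫ (F.map f).toFunctor.map (e γ₀) ≫ m' γ₀ γ₁ f) := by rw [he γ₀ γ₁ f]
    _ = inv (m' γ₀ γ₁ f) ≫ (F.map f).toFunctor.map (inv (e γ₀)) ≫ inv (m γ₀ γ₁ f) := by
        simp only [IsIso.inv_comp, Functor.map_inv, Category.assoc]

/-- Hom-terms of a neutral (fiberwise groupoid) type are symmetric: if every fiber `F.obj γ`
is a groupoid, `t = (a, m)` is a contravariant section, `t' = (a', m')` a covariant section,
and `e` is a hom-term from `t` to `t'`, then the family of inverses `(inv (e γ))_γ` is a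
hom-term from the fiberwise coercion of `t'` to the fiberwise coercion of `t`; explicitly,
`inv (e γ₁) = inv (m' f) ≫ (F.map f).toFunctor.map (inv (e γ₀)) ≫ inv (m f)` for all `f : γ₀ ⟶ γ₁`. -/
theorem neutral_homTerm_symm {Γ : Type} [SmallCategory Γ] (F : Γ ⥤ Cat)
    (hG : ∀ (γ : Γ) (x y : F.obj γ) (h : x ⟶ y), IsIso h)
    (a : ∀ γ : Γ, F.obj γ)
    (m : ∀ (γ₀ γ₁ : Γ) (f : γ₀ ⟶ γ₁), a γ₁ ⟶ (F.map f).toFunctor.obj (a γ₀))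
    (ht : IsContraSection F a m)
    (a' : ∀ γ : Γ, F.obj γ)
    (m' : ∀ (γ₀ γ₁ : Γ) (f : γ₀ ⟶ γ₁), (F.map f).toFunctor.obj (a' γ₀) ⟶ a' γ₁)
    (ht' : IsCovSection F a' m')
    (e : ∀ γ : Γ, a γ ⟶ a' γ) (he : IsHomTerm F a m a' m' e) :
    IsHomTerm F
      a' (fun γ₀ γ₁ f => letI := hG γ₁ _ _ (m' γ₀ γ₁ f); inv (m' γ₀ γ₁ f))
      a (fun γ₀ γ₁ f => letI := hG γ₁ _ _ (m γ₀ γ₁ f); inv (m γ₀ γ₁ f))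
      (fun γ => letI := hG γ _ _ (e γ); inv (e γ)) :=
  neutral_homTerm_symm_general F hG a m a' m' e he
end

section
/- Let A be a category, a an object of A, M : Under a ⥤ Cat a functor, and m an object of M.obj (Under.mk (𝟙 a)). For every object b of A and every morphism p : a ⟶ b, the morphism ι p : Under.mk (𝟙 a) ⟶ Under.mk p in Under a induced by p (using 𝟙 a ≫ p = p) yields an object J p := (M.map (ι p)).obj m of M.obj (Under.mk p); and this assignment satisfies the β-law J (𝟙 a) = m. (This is the soundness of directed path induction, the directed J-rule, in the category model over the empty context.) -/
open CategoryTheory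

/-- Directed path induction in the category model over the empty context: given a category
`A`, an object `a`, a functor `M : Under a ⥤ Cat` and an object `m` of
`M.obj (Under.mk (𝟙 a))`, every morphism `p : a ⟶ b` yields an object
`J p = (M.map (ι p)).obj m` of `M.obj (Under.mk p)`, where `ι p : Under.mk (𝟙 a) ⟶ Under.mk p`
is induced by `p`. -/
def dirJ {A : Type} [SmallCategory A] {a : A} (M : Under a ⥤ Cat)
    (m : M.obj (Under.mk (𝟙 a))) {b : A} (p : a ⟶ b) : M.obj (Under.mk p) :=
  (M.map (Under.homMk p (by simp) : Under.mk (𝟙 a) ⟶ Under.mk p)).toFunctor.obj m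

theorem Under.homMk_id_mk {C : Type*} [Category C] {X Y : C} (p : X ⟶ Y) (h : p ≫ 𝟙 Y = p) :
    (Under.homMk (𝟙 Y) h : Under.mk p ⟶ Under.mk p) = 𝟙 (Under.mk p) := by
  ext; rfl

/-- Soundness of the directed J-rule in the category model over the empty context: the
β-law `J (𝟙 a) = m` holds. -/
theorem dirJ_beta {A : Type} [SmallCategory A] (a : A) (M : Under a ⥤ Cat)
    (m : M.obj (Under.mk (𝟙 a))) :
    dirJ M m (𝟙 a) = m := by
  rw [dirJ, Under.homMk_id_mk (𝟙 a), M.map_id, Cat.Hom.id_obj]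
end
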